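/- No formula in the language {¬,∧,∨,𝐈} defines ■p on the class of all frames: consider the one-point reflexive model M with p both true and false at w₀, and the one-point irreflexive model M' with p both true and false at w₀'. Then every 𝐈-formula has the same supports of truth and falsity at w₀ and w₀', yet ■p is false at w₀ in M and not false at w₀' in M'. -/

import Mathlib

/-- Formulas of the language with ¬, ∧, ∨, □, ■, 𝐈 and ▲. -/
inductive Form : Type
  | var : ℕ → Form
  | neg : Form → Form
  | conj : Form → Form → Form
  | disj : Form → Form → Form
  | box : Form → Form
  | bbox : Form → Form
  | ign : Form → Form
  | tri : Form → Form

/-- A Kripke model for Belnap–Dunn modal logic. -/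
structure Model (W : Type) where
  R : W → W → Prop
  vp : ℕ → W → Prop
  vn : ℕ → W → Prop

mutual
  /-- support of truth -/
  def tr {W : Type} (M : Model W) : Form → W → Prop
    | .var n, w => M.vp n w
    | .neg φ, w => fa M φ w
    | .conj φ ψ, w => tr M φ w ∧ tr M ψ w
    | .disj φ ψ, w => tr M φ w ∨ tr M ψ w
    | .box φ, w => ∀ w', M.R w w' → tr M φ w'
    | .bbox φ, w => (∀ w', M.R w w' → tr M φ w') ∧
        ∀ w₁ w₂, M.R w w₁ → M.R w w₂ → fa M φ w₁ → fa M φ w₂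
    | .ign φ, w => tr M φ w ∧ (∀ w', M.R w w' → w' ≠ w → fa M φ w') ∧
        ∀ w₁ w₂, M.R w w₁ → w₁ ≠ w → M.R w w₂ → w₂ ≠ w → tr M φ w₁ → tr M φ w₂
    | .tri φ, w => (∀ w₁ w₂, M.R w w₁ → M.R w w₂ →
          (tr M φ w₁ → tr M φ w₂) ∧ (fa M φ w₁ → fa M φ w₂)) ∧
        ∀ w', M.R w w' → tr M φ w' ∨ fa M φ w'
  /-- support of falsity -/
  def fa {W : Type} (M : Model W) : Form → W → Prop
    | .var n, w => M.vn n w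
    | .neg φ, w => tr M φ w
    | .conj φ ψ, w => fa M φ w ∨ fa M ψ w
    | .disj φ ψ, w => fa M φ w ∧ fa M ψ w
    | .box φ, w => ∃ w', M.R w w' ∧ fa M φ w'
    | .bbox φ, w => (∃ w', M.R w w' ∧ fa M φ w') ∨
        ∃ w₁ w₂, M.R w w₁ ∧ M.R w w₂ ∧ tr M φ w₁ ∧ ¬ tr M φ w₂
    | .ign φ, w => fa M φ w ∨ (∃ w', M.R w w' ∧ w' ≠ w ∧ tr M φ w') ∨
        ∃ w₁ w₂, (M.R w w₁ ∧ w₁ ≠ w) ∧ (M.R w w₂ ∧ w₂ ≠ w) ∧ ¬ fa M φ w₁ ∧ fa M φ w₂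
    | .tri φ, w => (∃ w₁ w₂, M.R w w₁ ∧ M.R w w₂ ∧ tr M φ w₁ ∧ ¬ tr M φ w₂) ∨
        (∃ w₁ w₂, M.R w w₁ ∧ M.R w w₂ ∧ fa M φ w₁ ∧ ¬ fa M φ w₂) ∨
        (∃ w₁ w₂, M.R w w₁ ∧ M.R w w₂ ∧ tr M φ w₁ ∧ fa M φ w₂)
end

/-- φ contains an occurrence of □ -/
def hasBox : Form → Prop
  | .var _ => False
  | .neg φ => hasBox φ
  | .conj φ ψ => hasBox φ ∨ hasBox ψ
  | .disj φ ψ => hasBox φ ∨ hasBox ψ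
  | .box _ => True
  | .bbox φ => hasBox φ
  | .ign φ => hasBox φ
  | .tri φ => hasBox φ

/-- φ contains an occurrence of ■ -/
def hasBBox : Form → Prop
  | .var _ => False
  | .neg φ => hasBBox φ
  | .conj φ ψ => hasBBox φ ∨ hasBBox ψ
  | .disj φ ψ => hasBBox φ ∨ hasBBox ψ
  | .box φ => hasBBox φ
  | .bbox _ => True
  | .ign φ => hasBBox φ
  | .tri φ => hasBBox φ

/-- φ contains an occurrence of 𝐈 -/
def hasIgn : Form → Prop
  | .var _ => False
  | .neg φ => hasIgn φ
  | .conj φ ψ => hasIgn φ ∨ hasIgn ψ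
  | .disj φ ψ => hasIgn φ ∨ hasIgn ψ
  | .box φ => hasIgn φ
  | .bbox φ => hasIgn φ
  | .ign _ => True
  | .tri φ => hasIgn φ

/-- φ contains an occurrence of ▲ -/
def hasTri : Form → Prop
  | .var _ => False
  | .neg φ => hasTri φ
  | .conj φ ψ => hasTri φ ∨ hasTri ψ
  | .disj φ ψ => hasTri φ ∨ hasTri ψ
  | .box φ => hasTri φ
  | .bbox φ => hasTri φ
  | .ign φ => hasTri φ
  | .tri _ => True

/-- validity of the sequent φ ⊢ χ on the frame (W,R) -/
def validOn {W : Type} (R : W → W → Prop) (φ χ : Form) : Prop :=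
  ∀ (vp vn : ℕ → W → Prop) (w : W), tr ⟨R, vp, vn⟩ φ w → tr ⟨R, vp, vn⟩ χ w

/-- ♦φ := ¬■¬φ -/
def dia (φ : Form) : Form := .neg (.bbox (.neg φ))

/-! In a model where each world sees at most itself, `R!(w) = R(w) \ {w}` is empty, so `𝐈φ`
has exactly the truth and falsity supports of `φ`. The `{¬,∧,∨,𝐈}`-fragment is therefore blind to
the relation of such a model, and cannot separate the reflexive from the irreflexive one-point model.
But `■p` is false at the reflexive point, whose successor makes `p` false, while the irreflexive
point has no successor at which anything could be false. -/

section SubdiagonalModel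

variable {W : Type} {M : Model W}

theorem tr_ign_iff_of_succ_eq (hR : ∀ w w', M.R w w' → w' = w) (φ : Form) (w : W) :
    tr M (.ign φ) w ↔ tr M φ w := by
  simp only [tr]
  exact ⟨And.left, fun h => ⟨h, fun w' hw' hne => absurd (hR w w' hw') hne,
    fun w₁ _ hw₁ hne => absurd (hR w w₁ hw₁) hne⟩⟩

theorem fa_ign_iff_of_succ_eq (hR : ∀ w w', M.R w w' → w' = w) (φ : Form) (w : W) :
    fa M (.ign φ) w ↔ fa M φ w := by
  simp only [fa]
  refine ⟨?_, Or.inl⟩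
  rintro (h | ⟨w', hw', hne, -⟩ | ⟨w₁, -, ⟨hw₁, hne⟩, -⟩)
  · exact h
  · exact absurd (hR w w' hw') hne
  · exact absurd (hR w w₁ hw₁) hne

theorem tr_iff_and_fa_iff_of_succ_eq {M' : Model W} (hR : ∀ w w', M.R w w' → w' = w)
    (hR' : ∀ w w', M'.R w w' → w' = w) (hvp : M.vp = M'.vp) (hvn : M.vn = M'.vn) (φ : Form)
    (hb : ¬ hasBox φ) (hbb : ¬ hasBBox φ) (ht : ¬ hasTri φ) (w : W) :
    (tr M φ w ↔ tr M' φ w) ∧ (fa M φ w ↔ fa M' φ w) := by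
  induction φ generalizing w with
  | var n => simp only [tr, fa, hvp, hvn, and_self]
  | neg φ ih =>
    obtain ⟨htr, hfa⟩ := ih hb hbb ht w
    exact ⟨hfa, htr⟩
  | conj φ ψ ihφ ihψ | disj φ ψ ihφ ihψ =>
    simp only [hasBox, hasBBox, hasTri, not_or] at hb hbb ht
    obtain ⟨htrφ, hfaφ⟩ := ihφ hb.1 hbb.1 ht.1 w
    obtain ⟨htrψ, hfaψ⟩ := ihψ hb.2 hbb.2 ht.2 w
    simp only [tr, fa, htrφ, hfaφ, htrψ, hfaψ, and_self]
  | box => exact absurd trivial hb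
  | bbox => exact absurd trivial hbb
  | tri => exact absurd trivial ht
  | ign φ ih =>
    obtain ⟨htr, hfa⟩ := ih hb hbb ht w
    rw [tr_ign_iff_of_succ_eq hR, tr_ign_iff_of_succ_eq hR', fa_ign_iff_of_succ_eq hR,
      fa_ign_iff_of_succ_eq hR']
    exact ⟨htr, hfa⟩

end SubdiagonalModel

theorem not_fa_bbox_of_forall_not_rel {W : Type} {M : Model W} {w : W} (hw : ∀ w', ¬ M.R w w')
    (φ : Form) : ¬ fa M (.bbox φ) w := by
  rintro (⟨w', hw', -⟩ | ⟨w₁, -, hw₁, -⟩)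
  · exact hw w' hw'
  · exact hw w₁ hw₁

/-- no {¬,∧,∨,𝐈}-formula defines ■p on the class of all frames. -/
theorem ign_cannot_define_bbox :
    let M : Model Unit := ⟨fun _ _ => True, fun _ _ => True, fun _ _ => True⟩
    let M' : Model Unit := ⟨fun _ _ => False, fun _ _ => True, fun _ _ => True⟩
    (∀ φ : Form, ¬ hasBox φ → ¬ hasBBox φ → ¬ hasTri φ →
      ((tr M φ () ↔ tr M' φ ()) ∧ (fa M φ () ↔ fa M' φ ()))) ∧
    fa M (.bbox (.var 0)) () ∧ ¬ fa M' (.bbox (.var 0)) () := by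
  intro M M'
  refine ⟨fun φ hb hbb ht => ?_, Or.inl ⟨(), trivial, trivial⟩,
    not_fa_bbox_of_forall_not_rel (fun _ h => h) _⟩
  exact tr_iff_and_fa_iff_of_succ_eq (M := M) (M' := M') (fun _ _ _ => rfl) (fun _ _ _ => rfl)
    rfl rfl φ hb hbb ht ()
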